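/- arXiv:1508.07257 — 2 statements merged into one kernel-verified Lean document; each statement's English description precedes it below -/
import Mathlib

section
/- The clique number of the augmented cube graph AQ_4 equals 4, and AQ_4 has exactly 12 cliques of size 4. -/
/-!
Translations `x ↦ x + a` are automorphisms of `AQ_n`, because `(x + a) + (y + a) = x + y` over
`𝔽₂`. So every vertex lies in as many `(k + 1)`-cliques as `0` does, and these are `0` together
with a `k`-clique of the neighbourhood `S_n` of `0`. In `S_4` a finite check finds exactly three
triangles, `{0001, 0010, 0011}`, `{0011, 0100, 0111}`, `{0111, 1000, 1111}`, and no 4-clique.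
Counting incidences between the 16 vertices and the cliques gives `4 · #(4-cliques) = 16 · 3` and
`5 · #(5-cliques) = 16 · 0`: there are 12 cliques of size 4 and none of size 5.
-/

/-- The standard basis vector `e_j` of `𝔽₂ⁿ`. -/
def stdBasis (n : ℕ) (j : Fin n) : Fin n → ZMod 2 := fun i => if i = j then 1 else 0

/-- The vector `v_k` of `𝔽₂ⁿ` having `1` in its last `k` coordinates and `0` elsewhere. -/
def lastOnes (n k : ℕ) : Fin n → ZMod 2 := fun i => if n - k ≤ i.val then 1 else 0

/-- The generating set `S_n` of the augmented cube. -/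
def genSet (n : ℕ) : Set (Fin n → ZMod 2) :=
  {x | (∃ j : Fin n, x = stdBasis n j) ∨ ∃ k : ℕ, 2 ≤ k ∧ k ≤ n ∧ x = lastOnes n k}

/-- The augmented cube graph `AQ_n`. -/
def AQ (n : ℕ) : SimpleGraph (Fin n → ZMod 2) where
  Adj x y := x ≠ y ∧ x + y ∈ genSet n
  symm := ⟨fun x y h => ⟨h.1.symm, by rw [add_comm]; exact h.2⟩⟩
  loopless := ⟨fun x h => h.1 rfl⟩

open Finset

namespace SimpleGraph

variable {α β : Type*} {G : SimpleGraph α} {H : SimpleGraph β}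

theorem cliqueNum_eq_of_isNClique_of_cliqueFree [Finite α] {n : ℕ} {s : Finset α}
    (hs : G.IsNClique n s) (h : G.CliqueFree (n + 1)) : G.cliqueNum = n := by
  obtain ⟨t, ht⟩ := G.exists_isNClique_cliqueNum
  refine le_antisymm ?_ (hs.card_eq ▸ hs.isClique.card_le_cliqueNum)
  by_contra! hlt
  exact h.mono hlt t ht

theorem Iso.isNClique_map_iff (e : G ≃g H) {n : ℕ} {s : Finset α} :
    H.IsNClique n (s.map e.toEquiv.toEmbedding) ↔ G.IsNClique n s := by
  rw [isNClique_iff, isNClique_iff, card_map, coe_map, IsClique, IsClique,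
    (Function.Embedding.injective _).injOn.pairwise_image]
  have hadj : Function.onFun H.Adj e.toEquiv.toEmbedding = G.Adj := by
    ext; exact e.map_adj_iff
  rw [hadj]

variable [Fintype α] [DecidableEq α] [DecidableRel G.Adj]

theorem Iso.card_filter_mem_cliqueFinset [Fintype β] [DecidableEq β] [DecidableRel H.Adj]
    (e : G ≃g H) (n : ℕ) (v : α) :
    #{t ∈ H.cliqueFinset n | e v ∈ t} = #{t ∈ G.cliqueFinset n | v ∈ t} := by
  symm
  refine card_equiv e.toEquiv.finsetCongr fun t => ?_
  simp only [mem_filter, mem_cliqueFinset_iff, Equiv.finsetCongr_apply, e.isNClique_map_iff]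
  exact and_congr_right' (mem_map' e.toEquiv.toEmbedding).symm

theorem card_filter_mem_cliqueFinset_succ (v : α) (n : ℕ) :
    #{t ∈ G.cliqueFinset (n + 1) | v ∈ t} =
      #{s ∈ (G.neighborFinset v).powerset | G.IsNClique n s} := by
  symm
  refine card_nbij' (insert v) (fun t => t.erase v) ?_ ?_ ?_ ?_
  · intro s hs
    simp only [coe_filter, mem_powerset, Set.mem_ofPred_eq, mem_cliqueFinset_iff] at hs ⊢
    exact ⟨hs.2.insert fun b hb => (mem_neighborFinset G v b).1 (hs.1 hb), mem_insert_self v s⟩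
  · intro t ht
    simp only [coe_filter, mem_powerset, Set.mem_ofPred_eq, mem_cliqueFinset_iff] at ht ⊢
    refine ⟨fun w hw => ?_, ht.1.erase_of_mem ht.2⟩
    exact (mem_neighborFinset G v w).2
      (ht.1.isClique ht.2 (mem_of_mem_erase hw) (ne_of_mem_erase hw).symm)
  · intro s hs
    simp only [coe_filter, mem_powerset, Set.mem_ofPred_eq] at hs
    exact erase_insert fun hv => G.notMem_neighborFinset_self v (hs.1 hv)
  · intro t ht
    simp only [coe_filter, Set.mem_ofPred_eq] at ht
    exact insert_erase ht.2

theorem card_cliqueFinset_mul_eq {n c : ℕ} (h : ∀ v, #{t ∈ G.cliqueFinset n | v ∈ t} = c) :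
    #(G.cliqueFinset n) * n = Fintype.card α * c := by
  rw [← sum_card h, sum_const_nat fun t ht => (mem_cliqueFinset_iff.1 ht).card_eq]

end SimpleGraph

namespace AQ

instance (n : ℕ) (x : Fin n → ZMod 2) : Decidable (x ∈ genSet n) :=
  decidable_of_iff ((∃ j, x = stdBasis n j) ∨ ∃ k ∈ Icc (2 : ℕ) n, x = lastOnes n k) <| by
    simp [genSet, and_assoc]

instance (n : ℕ) : DecidableRel (AQ n).Adj := fun x y =>
  inferInstanceAs (Decidable (x ≠ y ∧ x + y ∈ genSet n))

def translate (n : ℕ) (a : Fin n → ZMod 2) : AQ n ≃g AQ n where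
  toEquiv := Equiv.addRight a
  map_rel_iff' {x y} := by
    simp only [AQ, Equiv.coe_addRight, ne_eq, add_left_inj, add_add_add_comm x a y a,
      ZModModule.add_self, add_zero]

@[simp]
theorem translate_apply (n : ℕ) (a x : Fin n → ZMod 2) : translate n a x = x + a := rfl

theorem card_filter_mem_cliqueFinset_succ (n k : ℕ) (v : Fin n → ZMod 2) :
    #{t ∈ (AQ n).cliqueFinset (k + 1) | v ∈ t} =
      #{s ∈ ((AQ n).neighborFinset 0).powerset | (AQ n).IsNClique k s} := by
  rw [← SimpleGraph.card_filter_mem_cliqueFinset_succ]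
  simpa using (translate n v).card_filter_mem_cliqueFinset (k + 1) 0

theorem four_card_isNClique_three_neighborFinset_zero :
    #{s ∈ ((AQ 4).neighborFinset 0).powerset | (AQ 4).IsNClique 3 s} = 3 := by
  decide

theorem four_card_isNClique_four_neighborFinset_zero :
    #{s ∈ ((AQ 4).neighborFinset 0).powerset | (AQ 4).IsNClique 4 s} = 0 := by
  decide

theorem four_card_cliqueFinset_four : #((AQ 4).cliqueFinset 4) = 12 := by
  have h := (AQ 4).card_cliqueFinset_mul_eq fun v =>
    (card_filter_mem_cliqueFinset_succ 4 3 v).trans four_card_isNClique_three_neighborFinset_zero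
  norm_num [Fintype.card_fun] at h
  omega

theorem four_cliqueFree_five : (AQ 4).CliqueFree 5 := by
  have h := (AQ 4).card_cliqueFinset_mul_eq fun v =>
    (card_filter_mem_cliqueFinset_succ 4 4 v).trans four_card_isNClique_four_neighborFinset_zero
  rw [mul_zero, mul_eq_zero, card_eq_zero, SimpleGraph.cliqueFinset_eq_empty_iff] at h
  exact h.resolve_right (by norm_num)

end AQ

/-- The clique number of `AQ_4` is 4, and `AQ_4` has exactly 12 cliques of size 4. -/
theorem AQ4_cliqueNum_and_count :
    (AQ 4).cliqueNum = 4 ∧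
      {t : Finset (Fin 4 → ZMod 2) | (AQ 4).IsNClique 4 t}.ncard = 12 := by
  obtain ⟨s, hs⟩ : ((AQ 4).cliqueFinset 4).Nonempty := by
    rw [← card_pos, AQ.four_card_cliqueFinset_four]
    norm_num
  refine ⟨SimpleGraph.cliqueNum_eq_of_isNClique_of_cliqueFree
    (SimpleGraph.mem_cliqueFinset_iff.1 hs) AQ.four_cliqueFree_five, ?_⟩
  rw [← AQ.four_card_cliqueFinset_four, ← Set.ncard_coe_finset, SimpleGraph.coe_cliqueFinset]
  rfl
end

section
/- Each of the following three subsets of 𝔽₂⁴ is a block for the action of Aut(AQ_4) on the vertices of the augmented cube graph AQ_4: Δ = {0000, 0100}; Δ' = {0000, 0100, 0011, 0111}; and Δ'' = {0000, 0100, 0011, 0111, 1001, 1010, 1101, 1110}. That is, for every automorphism g of AQ_4 and each of these sets, the image under g either equals the set or is disjoint from it. -/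
namespace Relation

variable {α : Type*} {r p : α → α → Prop}

instance [Fintype α] [DecidableRel r] [DecidableRel p] : DecidableRel (Comp r p) :=
  fun _ _ => inferInstanceAs (Decidable (∃ _, _ ∧ _))

instance [DecidableEq α] [DecidableRel r] : DecidableRel (ReflGen r) :=
  fun _ _ => decidable_of_iff' _ (reflGen_iff _ _ _)

end Relation

namespace Equiv

variable {α : Type*}

def PreservesRel (e : α ≃ α) (r : α → α → Prop) : Prop :=
  ∀ x y, r (e x) (e y) ↔ r x y

variable {e : α ≃ α} {r p : α → α → Prop}

theorem PreservesRel.reflGen (hr : e.PreservesRel r) : e.PreservesRel (Relation.ReflGen r) :=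
  fun x y => by simp only [Relation.reflGen_iff, e.apply_eq_iff_eq, hr x y]

theorem PreservesRel.comp (hr : e.PreservesRel r) (hp : e.PreservesRel p) :
    e.PreservesRel (Relation.Comp r p) := by
  intro x z
  constructor
  · rintro ⟨y, hxy, hyz⟩
    refine ⟨e.symm y, (hr _ _).1 ?_, (hp _ _).1 ?_⟩ <;> rwa [e.apply_symm_apply]
  · rintro ⟨y, hxy, hyz⟩
    exact ⟨e y, (hr _ _).2 hxy, (hp _ _).2 hyz⟩

theorem PreservesRel.image_eq_or_disjoint (hr : e.PreservesRel r) {s : Set α}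
    (hs : ∀ a ∈ s, ∀ y, r a y ↔ y ∈ s) : e '' s = s ∨ Disjoint (e '' s) s := by
  by_cases h : ∃ a ∈ s, e a ∈ s
  · obtain ⟨a, ha, hea⟩ := h
    left
    ext y
    rw [e.image_eq_preimage_symm, Set.mem_preimage, ← hs a ha, ← hs (e a) hea, ← hr,
      e.apply_symm_apply]
  · push Not at h
    exact Or.inr (Set.disjoint_left.2 fun _ ⟨a, ha, hy⟩ => hy ▸ h a ha)

end Equiv

namespace SimpleGraph

variable {V W : Type*} [Fintype V] [Fintype W]

theorem Iso.card_commonNeighbors {G : SimpleGraph V} {H : SimpleGraph W} [DecidableRel G.Adj]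
    [DecidableRel H.Adj] (e : G ≃g H) (x y : V) :
    Fintype.card (H.commonNeighbors (e x) (e y)) = Fintype.card (G.commonNeighbors x y) :=
  (Fintype.card_congr (e.toEquiv.subtypeEquiv fun z => by
    simp only [mem_commonNeighbors, RelIso.coe_fn_toEquiv, e.map_adj_iff])).symm

variable (G : SimpleGraph V) [DecidableRel G.Adj]

def AdjManyCommon (k : ℕ) (x y : V) : Prop :=
  G.Adj x y ∧ k < Fintype.card (G.commonNeighbors x y)

def NonadjFewCommon (k : ℕ) (x y : V) : Prop :=
  ¬ G.Adj x y ∧ Fintype.card (G.commonNeighbors x y) ≤ k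

instance (k : ℕ) : DecidableRel (G.AdjManyCommon k) :=
  fun _ _ => inferInstanceAs (Decidable (_ ∧ _))

instance (k : ℕ) : DecidableRel (G.NonadjFewCommon k) :=
  fun _ _ => inferInstanceAs (Decidable (_ ∧ _))

variable {G}

theorem Iso.preservesRel_adjManyCommon (e : G ≃g G) (k : ℕ) :
    e.toEquiv.PreservesRel (G.AdjManyCommon k) := fun x y => by
  simp only [AdjManyCommon, RelIso.coe_fn_toEquiv, e.map_adj_iff, e.card_commonNeighbors]

theorem Iso.preservesRel_nonadjFewCommon (e : G ≃g G) (k : ℕ) :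
    e.toEquiv.PreservesRel (G.NonadjFewCommon k) := fun x y => by
  simp only [NonadjFewCommon, RelIso.coe_fn_toEquiv, e.map_adj_iff, e.card_commonNeighbors]

end SimpleGraph

theorem mem_genSet_iff {n : ℕ} {x : Fin n → ZMod 2} :
    x ∈ genSet n ↔ (∃ j, x = stdBasis n j) ∨ ∃ k ∈ Finset.Icc 2 n, x = lastOnes n k := by
  simp only [genSet, Finset.mem_Icc, Set.mem_ofPred_eq, and_assoc]

instance (n : ℕ) : DecidablePred (· ∈ genSet n) := fun _ => decidable_of_iff' _ mem_genSet_iff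

instance (n : ℕ) : DecidableRel (AQ n).Adj := fun x y =>
  inferInstanceAs (Decidable (x ≠ y ∧ x + y ∈ genSet n))

/-- The three sets `Δ = {0000, 0100}`, `Δ' = {0000, 0100, 0011, 0111}` and
`Δ'' = {0000, 0100, 0011, 0111, 1001, 1010, 1101, 1110}` are blocks for the
action of `Aut(AQ_4)` on the vertices of `AQ_4`. -/
theorem AQ4_blocks (g : AQ 4 ≃g AQ 4) :
    (⇑g '' ({![0,0,0,0], ![0,1,0,0]} : Set (Fin 4 → ZMod 2)) =
        ({![0,0,0,0], ![0,1,0,0]} : Set (Fin 4 → ZMod 2)) ∨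
      Disjoint (⇑g '' ({![0,0,0,0], ![0,1,0,0]} : Set (Fin 4 → ZMod 2)))
        ({![0,0,0,0], ![0,1,0,0]} : Set (Fin 4 → ZMod 2))) ∧
    (⇑g '' ({![0,0,0,0], ![0,1,0,0], ![0,0,1,1], ![0,1,1,1]} : Set (Fin 4 → ZMod 2)) =
        ({![0,0,0,0], ![0,1,0,0], ![0,0,1,1], ![0,1,1,1]} : Set (Fin 4 → ZMod 2)) ∨
      Disjoint
        (⇑g '' ({![0,0,0,0], ![0,1,0,0], ![0,0,1,1], ![0,1,1,1]} : Set (Fin 4 → ZMod 2)))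
        ({![0,0,0,0], ![0,1,0,0], ![0,0,1,1], ![0,1,1,1]} : Set (Fin 4 → ZMod 2))) ∧
    (⇑g '' ({![0,0,0,0], ![0,1,0,0], ![0,0,1,1], ![0,1,1,1],
          ![1,0,0,1], ![1,0,1,0], ![1,1,0,1], ![1,1,1,0]} : Set (Fin 4 → ZMod 2)) =
        ({![0,0,0,0], ![0,1,0,0], ![0,0,1,1], ![0,1,1,1],
          ![1,0,0,1], ![1,0,1,0], ![1,1,0,1], ![1,1,1,0]} : Set (Fin 4 → ZMod 2)) ∨
      Disjoint
        (⇑g '' ({![0,0,0,0], ![0,1,0,0], ![0,0,1,1], ![0,1,1,1],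
          ![1,0,0,1], ![1,0,1,0], ![1,1,0,1], ![1,1,1,0]} : Set (Fin 4 → ZMod 2)))
        ({![0,0,0,0], ![0,1,0,0], ![0,0,1,1], ![0,1,1,1],
          ![1,0,0,1], ![1,0,1,0], ![1,1,0,1], ![1,1,1,0]} : Set (Fin 4 → ZMod 2))) := by
  refine ⟨?_, ?_, ?_⟩
  · exact ((g.preservesRel_adjManyCommon 2).comp
      (g.preservesRel_adjManyCommon 2)).image_eq_or_disjoint (by decide)
  · exact ((g.preservesRel_adjManyCommon 2).reflGen.comp
      (g.preservesRel_adjManyCommon 2).reflGen).image_eq_or_disjoint (by decide)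
  · exact ((g.preservesRel_nonadjFewCommon 2).reflGen.comp
      (g.preservesRel_nonadjFewCommon 2).reflGen).image_eq_or_disjoint (by decide)
end
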